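/- arXiv:2402.03178 — 2 statements merged into one kernel-verified Lean document; each statement's English description precedes it below -/
import Mathlib

section
/- Let $E$ be a finite-dimensional real inner product space, $W$ a finite group acting on $E$ by orthogonal transformations, and $W_J \le W$ a subgroup. Suppose $E = E_J \oplus E_J^\perp$ is an orthogonal decomposition such that $W_J$ preserves $E_J$ and fixes every vector of $E_J^\perp$. For $v \in E$ write $v^J$ for the orthogonal projection of $v$ onto $E_J$. Then for every $\mu \in E$ and every $H \in E$ with $H = H^J + H^{J\perp}$ (where $H^{J\perp} = H - H^J$), one has $\sum_{s \in W} \sum_{s_J \in W_J} \det(s_J s)\, e^{\langle s_J s \mu, H\rangle} = \sum_{s \in W} \det(s)\, e^{\langle s\mu, H^{J\perp}\rangle} \sum_{s_J \in W_J} \det(s_J)\, e^{\langle s_J (s\mu)^J, H^J\rangle}$, where $\det : W \to \{\pm1\}$ is a fixed group homomorphism. -/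
/-!
Split `s_J s μ` along `E = E_J ⊕ E_Jᗮ`. Since `s_J` fixes `E_Jᗮ` pointwise and preserves `E_J`,
it commutes with the projection onto `E_J` and moves every vector only inside `E_J`. Hence
`⟪s_J s μ, H⟫ = ⟪s μ, H - H^J⟫ + ⟪s_J (s μ)^J, H^J⟫`, the exponential factorises, and so does the
sign because `det` is multiplicative.
-/

open scoped InnerProductSpace RealInnerProductSpace

namespace Submodule

variable {𝕜 E F : Type*} [RCLike 𝕜] [NormedAddCommGroup E] [InnerProductSpace 𝕜 E]
  [FunLike F E E] [LinearMapClass F 𝕜 E E]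
  (K : Submodule 𝕜 E) [K.HasOrthogonalProjection] {g : F}

theorem inner_eq_inner_starProjection_add_inner_sub_starProjection (x y : E) :
    ⟪x, y⟫_𝕜 = ⟪K.starProjection x, K.starProjection y⟫_𝕜 + ⟪x, y - K.starProjection y⟫_𝕜 := by
  rw [inner_starProjection_left_eq_right, starProjection_eq_self_iff.2 (starProjection_apply_mem _ _),
    inner_sub_right, add_sub_cancel]

theorem map_eq_map_starProjection_add_sub_starProjection (hfix : ∀ v ∈ Kᗮ, g v = v) (v : E) :
    g v = g (K.starProjection v) + (v - K.starProjection v) := by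
  conv_lhs => rw [← add_sub_cancel (K.starProjection v) v]
  rw [map_add, hfix _ (sub_starProjection_mem_orthogonal v)]

theorem starProjection_map_of_mapsTo (hK : ∀ v ∈ K, g v ∈ K) (hfix : ∀ v ∈ Kᗮ, g v = v) (v : E) :
    K.starProjection (g v) = g (K.starProjection v) :=
  eq_starProjection_of_mem_orthogonal' (hK _ (starProjection_apply_mem _ _))
    (sub_starProjection_mem_orthogonal v) (map_eq_map_starProjection_add_sub_starProjection K hfix v)

theorem map_sub_self_mem_of_mapsTo (hK : ∀ v ∈ K, g v ∈ K) (hfix : ∀ v ∈ Kᗮ, g v = v) (v : E) :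
    g v - v ∈ K := by
  rw [map_eq_map_starProjection_add_sub_starProjection K hfix v, add_sub_assoc, sub_sub_cancel_left,
    ← sub_eq_add_neg]
  exact K.sub_mem (hK _ (starProjection_apply_mem _ _)) (starProjection_apply_mem _ _)

theorem inner_map_eq_of_mapsTo (hK : ∀ v ∈ K, g v ∈ K) (hfix : ∀ v ∈ Kᗮ, g v = v) (v y : E) :
    ⟪g v, y⟫_𝕜 = ⟪v, y - K.starProjection y⟫_𝕜 + ⟪g (K.starProjection v), K.starProjection y⟫_𝕜 := by
  have hmoved : ⟪g v - v, y - K.starProjection y⟫_𝕜 = 0 :=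
    inner_right_of_mem_orthogonal (map_sub_self_mem_of_mapsTo K hK hfix v)
      (sub_starProjection_mem_orthogonal y)
  rw [inner_sub_left, sub_eq_zero] at hmoved
  rw [inner_eq_inner_starProjection_add_inner_sub_starProjection K,
    starProjection_map_of_mapsTo K hK hfix, hmoved, add_comm]

end Submodule

theorem stmt6_general (E : Type*) [NormedAddCommGroup E] [InnerProductSpace ℝ E]
    [FiniteDimensional ℝ E]
    (W : Type*) [Group W] [Fintype W] (ρ : W →* (E ≃ₗᵢ[ℝ] E))
    (WJ : Subgroup W) [Fintype WJ] (EJ : Submodule ℝ E)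
    (hWJ : ∀ sJ ∈ WJ, ∀ v ∈ EJ, ρ sJ v ∈ EJ)
    (hfix : ∀ sJ ∈ WJ, ∀ v ∈ EJᗮ, ρ sJ v = v)
    (d : W →* ℝ)
    (μ H : E) :
    ∑ s : W, ∑ sJ : WJ, d ((sJ : W) * s) * Real.exp ⟪ρ ((sJ : W) * s) μ, H⟫
      = ∑ s : W, d s * Real.exp ⟪ρ s μ, H - (Submodule.orthogonalProjectionOnto EJ H : E)⟫ *
          ∑ sJ : WJ, d (sJ : W) *
            Real.exp ⟪ρ (sJ : W) ((Submodule.orthogonalProjectionOnto EJ (ρ s μ) : E)),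
              (Submodule.orthogonalProjectionOnto EJ H : E)⟫ := by
  refine Finset.sum_congr rfl fun s _ => ?_
  rw [Finset.mul_sum]
  refine Finset.sum_congr rfl fun sJ _ => ?_
  simp only [Submodule.coe_orthogonalProjectionOnto_apply, map_mul, LinearIsometryEquiv.coe_mul,
    Function.comp_apply]
  rw [EJ.inner_map_eq_of_mapsTo (hWJ _ sJ.2) (hfix _ sJ.2), Real.exp_add]
  ring

/-- The algebraic core of the key character formula: splitting the alternating sum over
`W` and a subgroup `W_J` that preserves `E_J` and fixes `E_J^⊥` pointwise. -/
theorem stmt6 (E : Type*) [NormedAddCommGroup E] [InnerProductSpace ℝ E]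
    [FiniteDimensional ℝ E]
    (W : Type*) [Group W] [Fintype W] (ρ : W →* (E ≃ₗᵢ[ℝ] E))
    (WJ : Subgroup W) [Fintype WJ] (EJ : Submodule ℝ E)
    (hWJ : ∀ sJ ∈ WJ, ∀ v ∈ EJ, ρ sJ v ∈ EJ)
    (hfix : ∀ sJ ∈ WJ, ∀ v ∈ EJᗮ, ρ sJ v = v)
    (d : W →* ℝ) (hd : ∀ w, d w = 1 ∨ d w = -1)
    (μ H : E) :
    ∑ s : W, ∑ sJ : WJ, d ((sJ : W) * s) * Real.exp ⟪ρ ((sJ : W) * s) μ, H⟫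
      = ∑ s : W, d s * Real.exp ⟪ρ s μ, H - (Submodule.orthogonalProjectionOnto EJ H : E)⟫ *
          ∑ sJ : WJ, d (sJ : W) *
            Real.exp ⟪ρ (sJ : W) ((Submodule.orthogonalProjectionOnto EJ (ρ s μ) : E)),
              (Submodule.orthogonalProjectionOnto EJ H : E)⟫ :=
  stmt6_general E W ρ WJ EJ hWJ hfix d μ H
end

section
/- Let $\Sigma$ be the root system of type $A_r$ ($r \ge 1$) with extended simple system $\{\alpha_0, \alpha_1, \ldots, \alpha_r\}$. For a permutation $\mathcal{P} = (j_0, j_1, \ldots, j_r)$ of $\{0,1,\ldots,r\}$ and $i \in \{0,\ldots,r\}$, set $I_i = \{j_{i+1},\ldots,j_r\}$ and $n_i(\mathcal{P}) = |\Sigma^+| - |\Sigma^+_{I_i}|$, where $\Sigma_{I}$ is the parabolic subsystem generated by $\{\alpha_j : j \in I\}$ and $\Sigma^+_I$ its positive roots. Then for the permutation $\mathcal{P}_0 = (0,1,2,\ldots,r)$ one has $n_i(\mathcal{P}_0) = \binom{r+1}{2} - \binom{r-i+1}{2}$ for every $i$, and for every permutation $\mathcal{P}$ and every $i$, $n_i(\mathcal{P}_0)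 \le n_i(\mathcal{P})$. -/
/-- The standard basis vector `e i` of `ℝ^{r+1}`. -/
noncomputable def stdE (r : ℕ) (i : Fin (r + 1)) : Fin (r + 1) → ℝ := Pi.single i 1

/-- The extended simple roots of `A_r`: `α_j = e_j - e_{j+1}` (indices mod `r+1`). -/
noncomputable def extSimple (r : ℕ) (j : Fin (r + 1)) : Fin (r + 1) → ℝ :=
  stdE r j - stdE r (j + 1)

/-- The positive roots `e_i - e_j`, `i < j`, of the root system `A_r`. -/
def posRoots (r : ℕ) : Set (Fin (r + 1) → ℝ) :=
  {v | ∃ i j : Fin (r + 1), i < j ∧ v = stdE r i - stdE r j}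

/-- `n_i(𝒫) = |Σ⁺| - |Σ⁺_{I_i}|` where `I_i = {𝒫(i+1), …, 𝒫(r)}` and `Σ_{I}` is the
parabolic subsystem generated by `{α_j : j ∈ I}` (roots lying in the span). -/
noncomputable def peelN (r : ℕ) (P : Equiv.Perm (Fin (r + 1))) (i : Fin (r + 1)) : ℕ :=
  r * (r + 1) / 2 -
    Set.ncard {v ∈ posRoots r |
      v ∈ Submodule.span ℝ (extSimple r '' (P '' {j : Fin (r + 1) | i < j}))}

/-! The positive roots `e_a - e_b` lying in a subspace are the edges of a graph whose edge vectors
span a space of some rank `d`. The edges at the largest vertex `v` are linearly independent, and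
removing them lowers the rank, since no other edge involves `v`; by induction there are at most
`C(d+1, 2)` edges. As `Σ_{I_i}` is spanned by `r - i` simple roots, `|Σ⁺_{I_i}| ≤ C(r-i+1, 2)` for
every permutation. For `𝒫₀` equality holds: every `e_a - e_b` with `a < b` in `{0, i+1, …, r}` is a
sum of the simple roots `α_{i+1}, …, α_r`, passing through `α_r = e_r - e_0` when `a = 0`. -/

open Module Submodule Finset

namespace TypeA

section Graph

variable {ι : Type*} [LinearOrder ι]

def root (p : ι × ι) : ι → ℝ := Pi.single p.1 1 - Pi.single p.2 1

lemma root_injOn : Set.InjOn (root : ι × ι → ι → ℝ) {p | p.1 ≠ p.2} := by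
  intro p hp q _ h
  have h1 := congrFun h p.1
  have h2 := congrFun h p.2
  simp only [root, Pi.sub_apply, Pi.single_apply, if_pos, if_neg (Ne.symm hp), if_neg hp] at h1 h2
  refine Prod.ext (by_contra fun hne ↦ ?_) (by_contra fun hne ↦ ?_)
  · rw [if_neg hne] at h1
    split_ifs at h1 <;> norm_num at h1
  · rw [if_neg hne] at h2
    split_ifs at h2 <;> norm_num at h2

lemma linearIndependent_single_sub_single {κ : Type*} {f : κ → ι} (hf : Function.Injective f)
    {v : ι} (hv : ∀ k, f k ≠ v) :
    LinearIndependent ℝ (fun k ↦ (Pi.single (f k) 1 - Pi.single v 1 : ι → ℝ)) := by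
  classical
  refine LinearIndependent.of_comp (LinearMap.funLeft ℝ ℝ f) ?_
  convert Pi.linearIndependent_single_one κ ℝ using 1
  ext k l
  simp [LinearMap.funLeft, Pi.single_apply, hf.eq_iff, (hv l).symm]

theorem card_le_choose_finrank_span (E : Finset (ι × ι)) (hE : ∀ p ∈ E, p.1 < p.2) :
    #E ≤ (finrank ℝ (span ℝ (root '' (E : Set (ι × ι)))) + 1).choose 2 := by
  induction E using Finset.strongInduction with | H E ih =>
  rcases E.eq_empty_or_nonempty with rfl | hne
  · simp
  obtain ⟨p₀, hp₀E, hp₀max⟩ := E.exists_max_image Prod.snd hne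
  set v := p₀.2
  set Ev := E.filter (·.2 = v)
  set E' := E.filter (¬ ·.2 = v)
  have hE' : E' ⊂ E := filter_ssubset.2 ⟨p₀, hp₀E, not_not.2 rfl⟩
  have : FiniteDimensional ℝ (span ℝ (root '' (E : Set (ι × ι)))) :=
    FiniteDimensional.span_of_finite ℝ (E.finite_toSet.image root)
  have hcard : #E = #E' + #Ev := by rw [add_comm, card_filter_add_card_filter_not]
  have hspan_lt : span ℝ (root '' (E' : Set (ι × ι))) < span ℝ (root '' (E : Set (ι × ι))) := by
    refine SetLike.lt_iff_le_and_exists.2 ⟨span_mono (Set.image_mono (filter_subset _ _)),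
      root p₀, subset_span ⟨p₀, hp₀E, rfl⟩, fun hmem ↦ ?_⟩
    -- every vector of `E'` vanishes at `v`, while `root p₀` does not
    have hker : span ℝ (root '' (E' : Set (ι × ι))) ≤ LinearMap.ker (LinearMap.proj v) := by
      rw [span_le]
      rintro _ ⟨q, hq, rfl⟩
      obtain ⟨hqE, hqv⟩ := mem_filter.1 hq
      have h1 : q.1 ≠ v := ((hE q hqE).trans_le (hp₀max q hqE)).ne
      simp [root, Ne.symm h1, Ne.symm hqv]
    have := hker hmem
    simp [root, (hE p₀ hp₀E).ne', v] at this
  have hEv : #Ev ≤ finrank ℝ (span ℝ (root '' (E : Set (ι × ι)))) := by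
    have hv : ∀ p ∈ Ev, p.2 = v := fun p hp ↦ (mem_filter.1 hp).2
    have hind : LinearIndependent ℝ (fun p : Ev ↦ root p.1) := by
      have key := linearIndependent_single_sub_single (f := fun p : Ev ↦ p.1.1) (v := v)
        (fun p q h ↦ Subtype.ext (Prod.ext h ((hv p p.2).trans (hv q q.2).symm)))
        (fun p ↦ ((hE p.1 (mem_filter.1 p.2).1).trans_eq (hv p p.2)).ne)
      convert key using 2 with p
      simp [root, hv p p.2]
    rw [← Fintype.card_coe, ← finrank_span_eq_card hind]
    refine Submodule.finrank_mono (span_mono ?_)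
    rintro _ ⟨p, rfl⟩
    exact ⟨p.1, (mem_filter.1 p.2).1, rfl⟩
  have ih' := ih E' hE' fun p hp ↦ hE p (mem_filter.1 hp).1
  have hlt := Submodule.finrank_lt_finrank_of_lt hspan_lt
  set d := finrank ℝ (span ℝ (root '' (E : Set (ι × ι))))
  calc #E = #E' + #Ev := hcard
    _ ≤ d.choose 2 + d := add_le_add (ih'.trans (Nat.choose_le_choose 2 hlt)) hEv
    _ = (d + 1).choose 2 := by rw [Nat.choose_succ_succ', Nat.choose_one_right, add_comm]

end Graph

section Parabolic

variable {r : ℕ}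

def parabolicPosRoots (r : ℕ) (I : Set (Fin (r + 1))) : Set (Fin (r + 1) → ℝ) :=
  {v ∈ posRoots r | v ∈ span ℝ (extSimple r '' I)}

lemma ncard_posRoots_mem_le (W : Submodule ℝ (Fin (r + 1) → ℝ)) :
    {v ∈ posRoots r | v ∈ W}.ncard ≤ (finrank ℝ W + 1).choose 2 := by
  classical
  set E : Finset (Fin (r + 1) × Fin (r + 1)) := {p | p.1 < p.2 ∧ root p ∈ W}
  have hset : {v ∈ posRoots r | v ∈ W} = root '' (E : Set (Fin (r + 1) × Fin (r + 1))) := by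
    ext v
    simp only [E, posRoots, Set.mem_ofPred_eq, coe_filter, mem_univ, true_and, Set.mem_image,
      Prod.exists]
    constructor
    · rintro ⟨⟨a, b, hab, rfl⟩, hW⟩
      exact ⟨a, b, ⟨hab, hW⟩, rfl⟩
    · rintro ⟨a, b, ⟨hab, hW⟩, rfl⟩
      exact ⟨⟨a, b, hab, rfl⟩, hW⟩
  calc {v ∈ posRoots r | v ∈ W}.ncard ≤ #E := by
        rw [hset, ← Set.ncard_coe_finset E]
        exact Set.ncard_image_le E.finite_toSet
    _ ≤ _ := card_le_choose_finrank_span E fun p hp ↦ (mem_filter.1 hp).2.1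
    _ ≤ _ := by
        gcongr
        exact Submodule.finrank_mono (span_le.2 fun _ ⟨p, hp, hv⟩ ↦ hv ▸ (mem_filter.1 hp).2.2)

lemma finrank_span_extSimple_le (I : Set (Fin (r + 1))) :
    finrank ℝ (span ℝ (extSimple r '' I)) ≤ I.ncard := by
  classical
  exact (finrank_span_le_card _).trans
    ((Set.ncard_eq_toFinset_card' _).symm.le.trans (Set.ncard_image_le I.toFinite))

lemma ncard_Ioi (i : Fin (r + 1)) : (Set.Ioi i).ncard = r - i := by
  rw [← coe_Ioi, Set.ncard_coe_finset, Fin.card_Ioi]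
  omega

lemma ncard_parabolicPosRoots_le (P : Equiv.Perm (Fin (r + 1))) (i : Fin (r + 1)) :
    (parabolicPosRoots r (P '' {j | i < j})).ncard ≤ (r - i + 1).choose 2 := by
  refine (ncard_posRoots_mem_le _).trans (Nat.choose_le_choose 2 (Nat.add_le_add_right ?_ 1))
  rw [← ncard_Ioi i, ← P.injective.injOn.ncard_image]
  exact finrank_span_extSimple_le _

lemma stdE_sub_stdE_mem_span {I : Set (Fin (r + 1))} {a b : Fin (r + 1)} (ha : a ≤ b)
    (hI : ∀ j, a ≤ j → j < b → j ∈ I) : stdE r a - stdE r b ∈ span ℝ (extSimple r '' I) := by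
  induction b using Fin.induction generalizing a with
  | zero =>
    rw [Fin.le_zero_iff.1 ha, sub_self]
    exact zero_mem _
  | succ c ih =>
    rcases ha.eq_or_lt with rfl | ha
    · rw [sub_self]
      exact zero_mem _
    have hac : a ≤ c.castSucc := Fin.le_castSucc_iff.2 ha
    have hsplit : stdE r a - stdE r c.succ
        = (stdE r a - stdE r c.castSucc) + extSimple r c.castSucc := by
      rw [extSimple, Fin.coeSucc_eq_succ]
      abel
    rw [hsplit]
    exact add_mem (ih hac fun j h1 h2 ↦ hI j h1 (h2.trans c.castSucc_lt_succ))
      (subset_span ⟨_, hI _ hac c.castSucc_lt_succ, rfl⟩)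

lemma stdE_zero_sub_stdE_mem_span {I : Set (Fin (r + 1))} {b : Fin (r + 1)}
    (hI : ∀ j, b ≤ j → j ∈ I) : stdE r 0 - stdE r b ∈ span ℝ (extSimple r '' I) := by
  have hsplit : stdE r 0 - stdE r b
      = -((stdE r b - stdE r (Fin.last r)) + extSimple r (Fin.last r)) := by
    rw [extSimple, Fin.last_add_one]
    abel
  rw [hsplit]
  exact neg_mem (add_mem (stdE_sub_stdE_mem_span (Fin.le_last b) fun j hj _ ↦ hI j hj)
    (subset_span ⟨_, hI _ (Fin.le_last b), rfl⟩))

lemma ncard_parabolicPosRoots_Ioi (i : Fin (r + 1)) :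
    (parabolicPosRoots r {j | i < j}).ncard = (r - i + 1).choose 2 := by
  refine le_antisymm (by simpa using ncard_parabolicPosRoots_le 1 i) ?_
  set V : Finset (Fin (r + 1)) := insert 0 (Ioi i)
  have hV : #V = r - i + 1 := by
    rw [card_insert_of_notMem (by simp), Fin.card_Ioi]
    omega
  set E : Finset (Fin (r + 1) × Fin (r + 1)) := {x ∈ V ×ˢ V | x.1 < x.2}
  have hsub : root '' (E : Set (Fin (r + 1) × Fin (r + 1))) ⊆ parabolicPosRoots r {j | i < j} := by
    rintro _ ⟨⟨a, b⟩, hab, rfl⟩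
    simp only [E, V, coe_filter, mem_product, mem_insert, mem_Ioi, Set.mem_ofPred_eq] at hab
    obtain ⟨⟨ha, hb⟩, hab⟩ := hab
    have hib : i < b := hb.resolve_left (hab.trans_le' (Fin.zero_le a)).ne'
    refine ⟨⟨a, b, hab, rfl⟩, ?_⟩
    rcases ha with rfl | hia
    · exact stdE_zero_sub_stdE_mem_span fun j hj ↦ hib.trans_le hj
    · exact stdE_sub_stdE_mem_span hab.le fun j hj _ ↦ hia.trans_le hj
  calc (r - i + 1).choose 2 = #E := by rw [card_product_filter_lt, hV]
    _ = (root '' (E : Set (Fin (r + 1) × Fin (r + 1)))).ncard := by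
        rw [(root_injOn.mono fun x hx ↦ (mem_filter.1 hx).2.ne).ncard_image, Set.ncard_coe_finset]
    _ ≤ _ := Set.ncard_le_ncard hsub <| (Set.finite_range root).subset
        fun _ ⟨⟨a, b, _, hv⟩, _⟩ ↦ ⟨(a, b), hv.symm⟩

end Parabolic

end TypeA

open TypeA

theorem stmt18_general (r : ℕ) :
    (∀ i : Fin (r + 1),
      peelN r 1 i = (r + 1).choose 2 - (r - (i : ℕ) + 1).choose 2) ∧
    (∀ (P : Equiv.Perm (Fin (r + 1))) (i : Fin (r + 1)), peelN r 1 i ≤ peelN r P i) := by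
  have hpeel (P : Equiv.Perm (Fin (r + 1))) (i : Fin (r + 1)) :
      peelN r P i = (r + 1).choose 2 - (parabolicPosRoots r (P '' {j | i < j})).ncard := by
    rw [peelN, Nat.choose_two_right, Nat.add_sub_cancel, mul_comm]
    rfl
  have hid (i : Fin (r + 1)) : peelN r 1 i = (r + 1).choose 2 - (r - i + 1).choose 2 := by
    rw [hpeel, Equiv.Perm.coe_one, Set.image_id, ncard_parabolicPosRoots_Ioi]
  refine ⟨hid, fun P i ↦ ?_⟩
  rw [hid, hpeel]
  exact Nat.sub_le_sub_left (ncard_parabolicPosRoots_le P i) _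

/-- Type-`A_r` case of the peeling lemma: the identity permutation `𝒫₀ = (0,1,…,r)`
peels the root system most slowly, with
`n_i(𝒫₀) = C(r+1,2) - C(r-i+1,2) ≤ n_i(𝒫)` for every permutation `𝒫`. -/
theorem stmt18 (r : ℕ) (hr : 1 ≤ r) :
    (∀ i : Fin (r + 1),
      peelN r 1 i = (r + 1).choose 2 - (r - (i : ℕ) + 1).choose 2) ∧
    (∀ (P : Equiv.Perm (Fin (r + 1))) (i : Fin (r + 1)), peelN r 1 i ≤ peelN r P i) :=
  stmt18_general r
end
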